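/- arXiv:1804.01172 — 3 statements merged into one kernel-verified Lean document; each statement's English description precedes it below -/
import Mathlib

section
/- Let A be a symmetric sequence of length n with entries in {±1}. If PSD_A(s) > 4n for some integer s, then there do not exist sequences B, C, D such that A, B, C, D form a Williamson sequence. -/
/-!
By Wiener–Khinchin, `PSD_A(s)` is the discrete Fourier transform at `s` of `PAF_A`. For
Williamson sequences the four autocorrelations sum to `4n` at shift `0` and, because
`PAF(n - t) = PAF(t)` for every sequence, to `0` at every other shift. Hence
`PSD_A(s) + PSD_B(s) + PSD_C(s) + PSD_D(s) = 4n`, and as each PSD is non-negative,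
`PSD_A(s) ≤ 4n`.
-/

open Finset Complex ComplexConjugate

/-- The periodic autocorrelation function of the length-`n` sequence `a`. -/
def paf (n : ℕ) (a : ℕ → ℤ) (s : ℕ) : ℤ :=
  ∑ k ∈ Finset.range n, a k * a ((k + s) % n)

/-- `a` is a symmetric sequence of length `n`: `aᵢ = a_{n-i}` for `1 ≤ i < n`. -/
def SymmSeq (n : ℕ) (a : ℕ → ℤ) : Prop := ∀ i, 1 ≤ i → i < n → a i = a (n - i)

/-- All entries of the length-`n` sequence `a` are `±1`. -/
def PMOne (n : ℕ) (a : ℕ → ℤ) : Prop := ∀ i < n, a i = 1 ∨ a i = -1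

/-- `a,b,c,d` are Williamson sequences of order `n`. -/
def IsWilliamson (n : ℕ) (a b c d : ℕ → ℤ) : Prop :=
  SymmSeq n a ∧ SymmSeq n b ∧ SymmSeq n c ∧ SymmSeq n d ∧
  PMOne n a ∧ PMOne n b ∧ PMOne n c ∧ PMOne n d ∧
  ∀ s, 1 ≤ s → s ≤ n / 2 → paf n a s + paf n b s + paf n c s + paf n d s = 0

/-- The discrete Fourier transform of the length-`n` sequence `a`. -/
noncomputable def dft (n : ℕ) (a : ℕ → ℤ) (s : ℤ) : ℂ :=
  ∑ k ∈ Finset.range n, (a k : ℂ) * Complex.exp (2 * Real.pi * Complex.I * k * s / n)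

/-- The power spectral density of the length-`n` sequence `a`. -/
noncomputable def psd (n : ℕ) (a : ℕ → ℤ) (s : ℤ) : ℝ :=
  ‖dft n a s‖ ^ 2

theorem sum_range_add_mod {M : Type*} [AddCommMonoid M] (n j : ℕ) (f : ℕ → M) :
    ∑ k ∈ range n, f ((j + k) % n) = ∑ k ∈ range n, f k := by
  cases n with
  | zero => simp
  | succ m =>
    have hval (k : Fin (m + 1)) : (j + k) % (m + 1) = (Fin.ofNat (m + 1) j + k).val := by
      simp [Fin.val_add, Nat.add_mod]
    rw [← Fin.sum_univ_eq_sum_range (fun k => f ((j + k) % (m + 1))), ← Fin.sum_univ_eq_sum_range f]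
    simp only [hval]
    exact Equiv.sum_comp (Equiv.addLeft (Fin.ofNat (m + 1) j)) (fun k => f k.val)

theorem paf_zero {n : ℕ} {a : ℕ → ℤ} (ha : PMOne n a) : paf n a 0 = n := by
  have hsq : ∀ k ∈ range n, a k * a ((k + 0) % n) = 1 := by
    intro k hk
    rw [Nat.add_zero, Nat.mod_eq_of_lt (mem_range.mp hk)]
    rcases ha k (mem_range.mp hk) with h | h <;> simp [h]
  rw [paf, sum_congr rfl hsq, sum_const, card_range, nsmul_one]

theorem paf_sub (n : ℕ) (a : ℕ → ℤ) {t : ℕ} (ht : t ≤ n) : paf n a (n - t) = paf n a t := by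
  unfold paf
  rw [← sum_range_add_mod n t]
  refine sum_congr rfl fun k hk => ?_
  have hback : ((t + k) % n + (n - t)) % n = k := by
    rw [Nat.mod_add_mod, show t + k + (n - t) = k + n by omega, Nat.add_mod_right,
      Nat.mod_eq_of_lt (mem_range.mp hk)]
  rw [hback, mul_comm, Nat.add_comm t k]

/-- The Wiener–Khinchin theorem for the cyclic group of order `n`. -/
theorem norm_sq_sum_mul_pow (n : ℕ) (a : ℕ → ℤ) {ω : ℂ} (hωn : ω ^ n = 1) (hω : ‖ω‖ = 1) :
    ((‖∑ k ∈ range n, (a k : ℂ) * ω ^ k‖ ^ 2 : ℝ) : ℂ) =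
      ∑ t ∈ range n, (paf n a t : ℂ) * ω ^ t := by
  have hconj : conj ω * ω = 1 := by
    rw [mul_comm, mul_conj, normSq_eq_norm_sq, hω]; simp
  have hrow (j : ℕ) : ∑ k ∈ range n, (a j : ℂ) * conj ω ^ j * ((a k : ℂ) * ω ^ k) =
      ∑ t ∈ range n, (a j * a ((j + t) % n) : ℂ) * ω ^ t := by
    rw [← sum_range_add_mod n j]
    refine sum_congr rfl fun t _ => ?_
    calc (a j : ℂ) * conj ω ^ j * ((a ((j + t) % n) : ℂ) * ω ^ ((j + t) % n))
        = (a j * a ((j + t) % n) : ℂ) * ω ^ t * (conj ω * ω) ^ j := by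
          rw [← pow_eq_pow_mod _ hωn]; ring
      _ = (a j * a ((j + t) % n) : ℂ) * ω ^ t := by rw [hconj, one_pow, mul_one]
  set z := ∑ k ∈ range n, (a k : ℂ) * ω ^ k
  calc ((‖z‖ ^ 2 : ℝ) : ℂ) = conj z * z := by
        rw [mul_comm, mul_conj, normSq_eq_norm_sq]
    _ = ∑ j ∈ range n, ∑ k ∈ range n, (a j : ℂ) * conj ω ^ j * ((a k : ℂ) * ω ^ k) := by
        simp only [z, map_sum, map_mul, map_pow, map_intCast, sum_mul_sum]
    _ = ∑ j ∈ range n, ∑ t ∈ range n, (a j * a ((j + t) % n) : ℂ) * ω ^ t :=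
        sum_congr rfl fun j _ => hrow j
    _ = ∑ t ∈ range n, (paf n a t : ℂ) * ω ^ t := by
        rw [sum_comm]; simp only [paf, ← sum_mul]; push_cast; rfl

theorem exp_two_pi_I_mul_div_pow_self (n : ℕ) (s : ℤ) :
    cexp (2 * Real.pi * I * s / n) ^ n = 1 := by
  rcases eq_or_ne n 0 with rfl | hn
  · exact pow_zero _
  rw [← exp_nat_mul, show (n : ℂ) * (2 * Real.pi * I * s / n) = s * (2 * Real.pi * I) by
    field_simp]
  exact exp_int_mul_two_pi_mul_I s

theorem norm_exp_two_pi_I_mul_div (n : ℕ) (s : ℤ) : ‖cexp (2 * Real.pi * I * s / n)‖ = 1 := by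
  simp [norm_exp]

theorem psd_nonneg (n : ℕ) (a : ℕ → ℤ) (s : ℤ) : 0 ≤ psd n a s :=
  sq_nonneg _

theorem dft_eq_sum_mul_pow (n : ℕ) (a : ℕ → ℤ) (s : ℤ) :
    dft n a s = ∑ k ∈ range n, (a k : ℂ) * cexp (2 * Real.pi * I * s / n) ^ k := by
  refine sum_congr rfl fun k _ => ?_
  rw [← exp_nat_mul]
  ring_nf

theorem psd_eq_sum_paf (n : ℕ) (a : ℕ → ℤ) (s : ℤ) :
    (psd n a s : ℂ) = ∑ t ∈ range n, (paf n a t : ℂ) * cexp (2 * Real.pi * I * s / n) ^ t := by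
  rw [psd, dft_eq_sum_mul_pow]
  exact norm_sq_sum_mul_pow n a (exp_two_pi_I_mul_div_pow_self n s) (norm_exp_two_pi_I_mul_div n s)

namespace IsWilliamson

variable {n : ℕ} {a b c d : ℕ → ℤ}

theorem paf_add (hw : IsWilliamson n a b c d) {t : ℕ} (ht : t < n) :
    paf n a t + paf n b t + paf n c t + paf n d t = if t = 0 then 4 * n else 0 := by
  obtain ⟨-, -, -, -, ha, hb, hc, hd, hsum⟩ := hw
  split_ifs with h0
  · rw [h0, paf_zero ha, paf_zero hb, paf_zero hc, paf_zero hd]; push_cast; ring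
  rcases le_or_gt t (n / 2) with hle | hgt
  · exact hsum t (Nat.one_le_iff_ne_zero.mpr h0) hle
  · have := hsum (n - t) (by omega) (by omega)
    rwa [paf_sub n a ht.le, paf_sub n b ht.le, paf_sub n c ht.le, paf_sub n d ht.le] at this

theorem psd_add (hw : IsWilliamson n a b c d) (s : ℤ) :
    psd n a s + psd n b s + psd n c s + psd n d s = 4 * n := by
  apply ofReal_injective
  push_cast
  simp only [psd_eq_sum_paf, ← sum_add_distrib]
  set e := cexp (2 * Real.pi * I * s / n)
  calc ∑ t ∈ range n, ((paf n a t : ℂ) * e ^ t + (paf n b t : ℂ) * e ^ t +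
          (paf n c t : ℂ) * e ^ t + (paf n d t : ℂ) * e ^ t)
      = ∑ t ∈ range n, ((paf n a t + paf n b t + paf n c t + paf n d t : ℤ) : ℂ) * e ^ t := by
        refine sum_congr rfl fun t _ => ?_
        push_cast; ring
    _ = ∑ t ∈ range n, if t = 0 then (4 * n : ℂ) else 0 := by
        refine sum_congr rfl fun t ht => ?_
        rw [hw.paf_add (mem_range.mp ht)]
        split_ifs with h0 <;> simp [h0]
    _ = 4 * n := by
        rw [sum_ite_eq' (range n) 0]
        split_ifs <;> simp_all

end IsWilliamson

theorem psd_test_one_general (n : ℕ) (a : ℕ → ℤ)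
    (s : ℤ) (hs : psd n a s > 4 * n) :
    ¬ ∃ b c d : ℕ → ℤ, IsWilliamson n a b c d := by
  rintro ⟨b, c, d, hw⟩
  linarith [hw.psd_add s, psd_nonneg n b s, psd_nonneg n c s, psd_nonneg n d s]

theorem psd_test_one (n : ℕ) (a : ℕ → ℤ)
    (hsa : SymmSeq n a) (hpa : PMOne n a)
    (s : ℤ) (hs : psd n a s > 4 * n) :
    ¬ ∃ b c d : ℕ → ℤ, IsWilliamson n a b c d :=
  psd_test_one_general n a s hs
end

section
/- If A, B, C, D is a Williamson sequence of even order n = 2m, then a_i·b_i·c_i·d_i = a_{i+m}·b_{i+m}·c_{i+m}·d_{i+m} for all indices i with 0 ≤ i < m. -/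
/-!
Index the sequences by `ZMod n` and write each `±1` sequence as `x = 1 - 2 α`, where `α` is the
`0/1` indicator of its `-1` entries. Then `PAF_x(s) = n - 4 ∑ α + 4 ∑ₖ αₖ αₖ₊ₛ`, so for the four
sequences together the Williamson condition says `∑ ∑ₖ αₖ αₖ₊ₛ = ∑ ∑ α - n` for `1 ≤ s ≤ m`.
Reduce mod 2, where `n = 2m` vanishes. For symmetric `α` the terms of `∑ₖ αₖ αₖ₊ₛ` are paired by
`k ↦ -s - k`, so only the fixed points of this involution survive: there are none for `s = 1`,
and for `s = 2r` they are `k = -r, m - r`, contributing `α_r + α_{m+r}`. Comparing `s = 1` with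
`s = 2r` shows that the eight entries at positions `r` and `r + m` contain an even number of `-1`s
whenever `2r ≤ m`; the remaining `r < m` reduce to this case by the reflection `r ↦ m - r`.
-/

open Finset

section Autocorrelation

variable {R : Type*} [CommRing R] {n : ℕ} [NeZero n]

def autocorr (g : ZMod n → R) (s : ZMod n) : R := ∑ k, g k * g (k + s)

lemma autocorr_one_sub_two_mul (g : ZMod n → R) (s : ZMod n) :
    autocorr (fun k => 1 - 2 * g k) s = n - 4 * ∑ k, g k + 4 * autocorr g s := by
  have hshift : ∑ k, g (k + s) = ∑ k, g k := Equiv.sum_comp (Equiv.addRight s) g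
  have hexpand : ∀ k, (1 - 2 * g k) * (1 - 2 * g (k + s)) =
      1 - 2 * g k - 2 * g (k + s) + 4 * (g k * g (k + s)) := fun k => by ring
  simp only [autocorr, hexpand, sum_add_distrib, sum_sub_distrib, ← mul_sum, hshift, sum_const,
    card_univ, ZMod.card, nsmul_one]
  ring

lemma RingHom.map_autocorr {S : Type*} [CommRing S] (f : R →+* S) (g : ZMod n → R)
    (s : ZMod n) : f (autocorr g s) = autocorr (f ∘ g) s := by
  simp only [autocorr, map_sum, map_mul, Function.comp_apply]

end Autocorrelation

namespace ZMod

variable {n m : ℕ}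

lemma eq_zero_or_eq_of_add_self_eq_zero [NeZero n] (hn : n = 2 * m) {k : ZMod n}
    (hk : k + k = 0) : k = 0 ∨ k = m := by
  obtain ⟨t, ht⟩ : n ∣ k.val + k.val := by
    rw [← natCast_eq_zero_iff, Nat.cast_add, natCast_zmod_val, hk]
  have ht2 : t < 2 := by nlinarith [val_lt k]
  rw [← natCast_zmod_val k]
  interval_cases t
  · exact Or.inl (by rw [show k.val = 0 by omega, Nat.cast_zero])
  · exact Or.inr (congrArg _ (by omega))

lemma add_self_ne_neg_one (hn : 2 ∣ n) (k : ZMod n) : k + k ≠ -1 := by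
  intro hk
  have h := congrArg (castHom hn (ZMod 2)) hk
  rw [map_add, map_neg, map_one] at h
  generalize castHom hn (ZMod 2) k = x at h
  revert x
  decide

lemma natCast_add_self (hn : n = 2 * m) : (m : ZMod n) + m = 0 := by
  rw [← Nat.cast_add, ← two_mul, ← hn, natCast_self]

lemma apply_half_sub_of_neg_invariant {α : Type*} {g : ZMod n → α} (hn : n = 2 * m)
    (hg : ∀ k, g (-k) = g k) (r : ZMod n) : g (m - r) = g (m + r) := by
  rw [← hg, show -((m : ZMod n) - r) = m + r - (m + m) by ring, natCast_add_self hn, sub_zero]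

end ZMod

section CharTwo

variable {R : Type*} [CommRing R] [CharP R 2] {n m : ℕ} [NeZero n] {g : ZMod n → R}

lemma sum_eq_of_neg_invariant (hn : n = 2 * m) (hg : ∀ k, g (-k) = g k) :
    ∑ k, g k = g 0 + g m := by
  have hn0 := NeZero.ne n
  have hm : (0 : ZMod n) ≠ m := by
    intro h
    have := congrArg ZMod.val h
    rw [ZMod.val_zero, ZMod.val_cast_of_lt (by omega)] at this
    omega
  rw [← sum_add_sum_compl {(0 : ZMod n), (m : ZMod n)}, sum_pair hm, add_eq_left]
  refine sum_involution (fun k _ => -k) (fun k _ => by rw [hg, CharTwo.add_self_eq_zero])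
    (fun k hk _ hfix => ?_) (fun k hk => ?_) (fun k _ => neg_neg k)
  · simp only [mem_compl, mem_insert, mem_singleton] at hk
    exact hk (ZMod.eq_zero_or_eq_of_add_self_eq_zero hn (by linear_combination -hfix))
  · have hneg_m : -(m : ZMod n) = m := neg_eq_of_add_eq_zero_right (ZMod.natCast_add_self hn)
    simp only [mem_compl, mem_insert, mem_singleton, neg_eq_iff_eq_neg, hneg_m, neg_zero] at hk ⊢
    exact hk

lemma sum_eq_zero_of_neg_one_sub_invariant (hn : 2 ∣ n) (hg : ∀ k, g (-1 - k) = g k) :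
    ∑ k, g k = 0 :=
  sum_involution (fun k _ => -1 - k) (fun k _ => by rw [hg, CharTwo.add_self_eq_zero])
    (fun k _ _ h => ZMod.add_self_ne_neg_one hn k (by linear_combination -h))
    (fun _ _ => mem_univ _) (fun k _ => by ring)

lemma autocorr_one_eq_zero (hn : 2 ∣ n) (hg : ∀ k, g (-k) = g k) : autocorr g 1 = 0 :=
  sum_eq_zero_of_neg_one_sub_invariant hn fun k => by
    rw [← hg (-1 - k), ← hg (-1 - k + 1)]
    ring_nf

lemma autocorr_two_mul (hn : n = 2 * m) (hg : ∀ k, g (-k) = g k) (r : ZMod n) :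
    autocorr g (2 * r) = g r ^ 2 + g (m + r) ^ 2 := by
  have hshift : autocorr g (2 * r) = ∑ k, g (k - r) * g (k + r) := by
    rw [autocorr, ← Equiv.sum_comp (Equiv.subRight r)]
    congr! 3
    simp only [Equiv.subRight_apply]
    ring
  have hsymm : ∀ k, g (-k - r) * g (-k + r) = g (k - r) * g (k + r) := fun k => by
    rw [← hg (-k - r), ← hg (-k + r)]; ring_nf
  rw [hshift, sum_eq_of_neg_invariant hn hsymm, zero_sub, zero_add, hg,
    ZMod.apply_half_sub_of_neg_invariant hn hg, sq, sq]

end CharTwo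

section Sequences

variable {n : ℕ} {x : ℕ → ℤ}

def cyclicSeq (n : ℕ) (x : ℕ → ℤ) : ZMod n → ℤ := fun k => x k.val

lemma paf_eq_autocorr [NeZero n] (s : ℕ) : paf n x s = autocorr (cyclicSeq n x) s := by
  have hval : ∀ k : ZMod n, (k + s).val = (k.val + s) % n := fun k => by
    rw [ZMod.val_add, ZMod.val_natCast, Nat.add_mod_mod]
  symm
  refine sum_nbij' ZMod.val Nat.cast (fun k _ => mem_range.mpr (ZMod.val_lt k))
    (fun _ _ => mem_univ _) (fun k _ => ZMod.natCast_zmod_val k)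
    (fun j hj => ZMod.val_cast_of_lt (mem_range.mp hj)) (fun k _ => ?_)
  simp only [cyclicSeq, hval]

lemma SymmSeq.cyclicSeq_neg [NeZero n] (hx : SymmSeq n x) (k : ZMod n) :
    cyclicSeq n x (-k) = cyclicSeq n x k := by
  simp only [cyclicSeq, ZMod.neg_val]
  split_ifs with hk
  · rw [hk, ZMod.val_zero]
  · have hk₁ : 1 ≤ k.val := Nat.one_le_iff_ne_zero.mpr ((ZMod.val_ne_zero k).mpr hk)
    exact (hx k.val hk₁ (ZMod.val_lt k)).symm

lemma PMOne.cyclicSeq_eq_one_or_eq_neg_one [NeZero n] (hx : PMOne n x) (k : ZMod n) :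
    cyclicSeq n x k = 1 ∨ cyclicSeq n x k = -1 :=
  hx k.val (ZMod.val_lt k)

end Sequences

def negBit (y : ℤ) : ℤ := if y = 1 then 0 else 1

lemma one_sub_two_mul_negBit {y : ℤ} (hy : y = 1 ∨ y = -1) : 1 - 2 * negBit y = y := by
  rcases hy with rfl | rfl <;> norm_num [negBit]

lemma negBit_mul {y z : ℤ} (hy : IsUnit y) (hz : IsUnit z) :
    (negBit (y * z) : ZMod 2) = negBit y + negBit z := by
  rcases Int.isUnit_iff.mp hy with rfl | rfl <;> rcases Int.isUnit_iff.mp hz with rfl | rfl <;>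
    decide

lemma negBit_mul_mul_mul {w x y z : ℤ} (hw : IsUnit w) (hx : IsUnit x) (hy : IsUnit y)
    (hz : IsUnit z) :
    (negBit (w * x * y * z) : ZMod 2) = negBit w + negBit x + negBit y + negBit z := by
  rw [negBit_mul ((hw.mul hx).mul hy) hz, negBit_mul (hw.mul hx) hy, negBit_mul hw hx]

lemma eq_iff_negBit_add_eq_zero {y z : ℤ} (hy : IsUnit y) (hz : IsUnit z) :
    y = z ↔ (negBit y : ZMod 2) + negBit z = 0 := by
  rcases Int.isUnit_iff.mp hy with rfl | rfl <;> rcases Int.isUnit_iff.mp hz with rfl | rfl <;>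
    decide

def signPattern (n : ℕ) (x : ℕ → ℤ) : ZMod n → ZMod 2 := fun k => negBit (cyclicSeq n x k)

lemma signPattern_natCast {n j : ℕ} {x : ℕ → ℤ} (hj : j < n) :
    signPattern n x j = negBit (x j) := by
  simp only [signPattern, cyclicSeq, ZMod.val_cast_of_lt hj]

section Williamson

variable {n m : ℕ} [NeZero n] {x a b c d : ℕ → ℤ}

lemma PMOne.paf_eq (hx : PMOne n x) (s : ℕ) :
    paf n x s = n - 4 * ∑ k, negBit (cyclicSeq n x k)
      + 4 * autocorr (negBit ∘ cyclicSeq n x) s := by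
  have hx' : cyclicSeq n x = fun k => 1 - 2 * (negBit ∘ cyclicSeq n x) k :=
    funext fun k => (one_sub_two_mul_negBit (PMOne.cyclicSeq_eq_one_or_eq_neg_one hx k)).symm
  rw [paf_eq_autocorr, hx', autocorr_one_sub_two_mul, ← hx']
  rfl

lemma SymmSeq.signPattern_neg (hx : SymmSeq n x) (k : ZMod n) :
    signPattern n x (-k) = signPattern n x k := by
  unfold signPattern
  rw [hx.cyclicSeq_neg]

lemma SymmSeq.sum_signPattern (hn : n = 2 * m) (hx : SymmSeq n x) :
    ∑ k, signPattern n x k = signPattern n x 0 + signPattern n x m :=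
  sum_eq_of_neg_invariant hn hx.signPattern_neg

lemma SymmSeq.autocorr_signPattern_one (hn : n = 2 * m) (hx : SymmSeq n x) :
    autocorr (signPattern n x) 1 = 0 :=
  autocorr_one_eq_zero ⟨m, hn⟩ hx.signPattern_neg

lemma SymmSeq.autocorr_signPattern_two_mul (hn : n = 2 * m) (hx : SymmSeq n x) (r : ZMod n) :
    autocorr (signPattern n x) (2 * r) = signPattern n x r + signPattern n x (m + r) := by
  rw [autocorr_two_mul hn hx.signPattern_neg, ZMod.pow_card, ZMod.pow_card]

lemma IsWilliamson.sum_autocorr_signPattern (hW : IsWilliamson n a b c d) (hn : n = 2 * m)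
    {s : ℕ} (hs₁ : 1 ≤ s) (hs₂ : s ≤ m) :
    autocorr (signPattern n a) s + autocorr (signPattern n b) s
      + autocorr (signPattern n c) s + autocorr (signPattern n d) s
      = ∑ k, signPattern n a k + ∑ k, signPattern n b k
        + ∑ k, signPattern n c k + ∑ k, signPattern n d k := by
  obtain ⟨-, -, -, -, pa, pb, pc, pd, hpaf⟩ := hW
  have hsum := hpaf s hs₁ (by omega)
  rw [PMOne.paf_eq pa, PMOne.paf_eq pb, PMOne.paf_eq pc, PMOne.paf_eq pd] at hsum
  have hint : autocorr (negBit ∘ cyclicSeq n a) s + autocorr (negBit ∘ cyclicSeq n b) s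
      + autocorr (negBit ∘ cyclicSeq n c) s + autocorr (negBit ∘ cyclicSeq n d) s
      = ∑ k, negBit (cyclicSeq n a k) + ∑ k, negBit (cyclicSeq n b k)
        + ∑ k, negBit (cyclicSeq n c k) + ∑ k, negBit (cyclicSeq n d k) - n :=
    mul_left_cancel₀ four_ne_zero (by linear_combination hsum)
  have hcast := congrArg (Int.castRingHom (ZMod 2)) hint
  have hn2 : ((n : ℕ) : ZMod 2) = 0 := (ZMod.natCast_eq_zero_iff n 2).mpr ⟨m, hn⟩
  simp only [map_add, map_sub, map_sum, RingHom.map_autocorr, map_natCast, hn2,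
    sub_zero] at hcast
  exact hcast

lemma IsWilliamson.signPattern_add_eq_zero_of_two_mul_le (hW : IsWilliamson n a b c d)
    (hn : n = 2 * m) {r : ℕ} (hr : 2 * r ≤ m) :
    signPattern n a r + signPattern n a (m + r) + (signPattern n b r + signPattern n b (m + r))
      + (signPattern n c r + signPattern n c (m + r))
      + (signPattern n d r + signPattern n d (m + r)) = 0 := by
  have ⟨sa, sb, sc, sd, _⟩ := hW
  have hm : 1 ≤ m := by have := NeZero.ne n; omega
  have hzero := hW.sum_autocorr_signPattern hn le_rfl hm
  rw [Nat.cast_one, sa.autocorr_signPattern_one hn, sb.autocorr_signPattern_one hn,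
    sc.autocorr_signPattern_one hn, sd.autocorr_signPattern_one hn, sa.sum_signPattern hn,
    sb.sum_signPattern hn, sc.sum_signPattern hn, sd.sum_signPattern hn] at hzero
  rcases Nat.eq_zero_or_pos r with rfl | hr₀
  · simpa only [Nat.cast_zero, add_zero] using hzero.symm
  · have htwo := hW.sum_autocorr_signPattern hn (s := 2 * r) (by omega) hr
    rw [Nat.cast_mul, Nat.cast_ofNat, sa.autocorr_signPattern_two_mul hn,
      sb.autocorr_signPattern_two_mul hn, sc.autocorr_signPattern_two_mul hn,
      sd.autocorr_signPattern_two_mul hn, sa.sum_signPattern hn,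
      sb.sum_signPattern hn, sc.sum_signPattern hn, sd.sum_signPattern hn] at htwo
    linear_combination htwo - hzero

lemma IsWilliamson.negBit_add_eq_zero (hW : IsWilliamson n a b c d) (hn : n = 2 * m) {i : ℕ}
    (hi : i < m) :
    (negBit (a i) + negBit (a (i + m)) + (negBit (b i) + negBit (b (i + m)))
      + (negBit (c i) + negBit (c (i + m))) + (negBit (d i) + negBit (d (i + m))) : ZMod 2)
      = 0 := by
  have ⟨sa, sb, sc, sd, _⟩ := hW
  have hpair : ∀ x, SymmSeq n x →
      signPattern n x i + signPattern n x (m + i) = negBit (x i) + negBit (x (i + m)) :=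
    fun x _ => by
      rw [add_comm (m : ZMod n), ← Nat.cast_add, signPattern_natCast (j := i) (by omega),
        signPattern_natCast (j := i + m) (by omega)]
  rcases le_or_gt (2 * i) m with hle | hgt
  · have h := hW.signPattern_add_eq_zero_of_two_mul_le hn hle
    rwa [hpair a sa, hpair b sb, hpair c sc, hpair d sd] at h
  · have h := hW.signPattern_add_eq_zero_of_two_mul_le hn (r := m - i) (by omega)
    have hreflect : ∀ x, SymmSeq n x →
        signPattern n x (m - i : ℕ) + signPattern n x (m + (m - i : ℕ))
          = signPattern n x i + signPattern n x (m + i) := fun x hx => by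
      have hsub := ZMod.apply_half_sub_of_neg_invariant hn hx.signPattern_neg
      rw [Nat.cast_sub hi.le, hsub, show (m : ZMod n) + (m - i) = m - (i - m) by ring, hsub,
        add_sub_cancel, add_comm]
    rwa [hreflect a sa, hreflect b sb, hreflect c sc, hreflect d sd, hpair a sa, hpair b sb,
      hpair c sc, hpair d sd] at h

end Williamson

theorem williamson_product_even (n m : ℕ) (hn : n = 2 * m) (a b c d : ℕ → ℤ)
    (hW : IsWilliamson n a b c d) :
    ∀ i < m, a i * b i * c i * d i = a (i + m) * b (i + m) * c (i + m) * d (i + m) := by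
  intro i hi
  have : NeZero n := ⟨by omega⟩
  have hparity := hW.negBit_add_eq_zero hn hi
  obtain ⟨-, -, -, -, pa, pb, pc, pd, -⟩ := hW
  have hunit : ∀ j < n, IsUnit (a j) ∧ IsUnit (b j) ∧ IsUnit (c j) ∧ IsUnit (d j) := fun j hj =>
    ⟨Int.isUnit_iff.mpr (pa j hj), Int.isUnit_iff.mpr (pb j hj), Int.isUnit_iff.mpr (pc j hj),
      Int.isUnit_iff.mpr (pd j hj)⟩
  obtain ⟨ua, ub, uc, ud⟩ := hunit i (by omega)
  obtain ⟨ua', ub', uc', ud'⟩ := hunit (i + m) (by omega)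
  rw [eq_iff_negBit_add_eq_zero (((ua.mul ub).mul uc).mul ud)
      (((ua'.mul ub').mul uc').mul ud'),
    negBit_mul_mul_mul ua ub uc ud, negBit_mul_mul_mul ua' ub' uc' ud']
  linear_combination hparity
end

section
/- Let A, B, C, D be a Williamson sequence of order n and let k be an integer coprime to n. Define σ(i) = k·i mod n and let σ(X) denote the sequence whose i-th entry is x_{σ(i)}. Then σ(A), σ(B), σ(C), σ(D) is a Williamson sequence of order n (in particular, each sequence σ(X) is again symmetric). -/
lemma ZMod.val_natCast_mul {n : ℕ} (k : ℕ) (x : ZMod n) :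
    ((k : ZMod n) * x).val = k * x.val % n := by
  rw [ZMod.val_mul, ZMod.val_natCast, Nat.mod_mul_mod]

section ZModIndex

variable {n : ℕ} [NeZero n]

lemma paf_eq_sum_zmod (a : ℕ → ℤ) (s : ℕ) :
    paf n a s = ∑ x : ZMod n, a x.val * a (x + s).val := by
  refine Finset.sum_nbij' (fun i => (i : ZMod n)) ZMod.val (by simp)
    (fun x _ => Finset.mem_range.2 x.val_lt) (fun i hi => ZMod.val_natCast_of_lt
      (Finset.mem_range.1 hi)) (fun x _ => ZMod.natCast_zmod_val x) fun i hi => ?_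
  rw [ZMod.val_natCast_of_lt (Finset.mem_range.1 hi), ← Nat.cast_add, ZMod.val_natCast]

lemma paf_eq_of_natCast_eq_neg (a : ℕ → ℤ) {s t : ℕ} (h : (t : ZMod n) = -s) :
    paf n a s = paf n a t := by
  rw [paf_eq_sum_zmod, paf_eq_sum_zmod, h]
  refine Fintype.sum_equiv (Equiv.addRight (s : ZMod n)) _ _ fun x => ?_
  simp only [Equiv.coe_addRight, add_neg_cancel_right, mul_comm]

lemma paf_comp_mul_mod (a : ℕ → ℤ) {k : ℕ} (hk : k.Coprime n) (s : ℕ) :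
    paf n (fun i => a (k * i % n)) s = paf n a (k * s % n) := by
  let u : (ZMod n)ˣ := ZMod.unitOfCoprime k hk
  rw [paf_eq_sum_zmod, paf_eq_sum_zmod, ZMod.natCast_mod, Nat.cast_mul]
  refine Fintype.sum_equiv u.mulLeft _ _ fun x => ?_
  simp only [← ZMod.val_natCast_mul, Units.mulLeft_apply, ZMod.coe_unitOfCoprime, u, mul_add]

lemma symmSeq_iff_zmod (a : ℕ → ℤ) : SymmSeq n a ↔ ∀ x : ZMod n, a x.val = a (-x).val := by
  constructor
  · intro ha x
    rcases eq_or_ne x 0 with rfl | hx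
    · simp
    rw [ZMod.neg_val, if_neg hx]
    exact ha x.val (Nat.one_le_iff_ne_zero.2 ((ZMod.val_ne_zero x).2 hx)) x.val_lt
  · intro ha i hi hin
    have hx : (i : ZMod n) ≠ 0 := by
      rw [Ne, ZMod.natCast_eq_zero_iff]
      exact fun hdvd => absurd (Nat.le_of_dvd hi hdvd) (by omega)
    simpa [ZMod.neg_val, hx, ZMod.val_natCast_of_lt hin] using ha i

end ZModIndex

lemma SymmSeq.comp_mul_mod {n : ℕ} {a : ℕ → ℤ} (ha : SymmSeq n a) (k : ℕ) :
    SymmSeq n (fun i => a (k * i % n)) := by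
  rcases n.eq_zero_or_pos with rfl | hn
  · intro i _ hi
    omega
  have := NeZero.of_pos hn
  rw [symmSeq_iff_zmod] at ha ⊢
  intro x
  simp only [← ZMod.val_natCast_mul, mul_neg]
  exact ha _

lemma PMOne.comp {n : ℕ} {a : ℕ → ℤ} (ha : PMOne n a) {f : ℕ → ℕ} (hf : ∀ i < n, f i < n) :
    PMOne n (a ∘ f) :=
  fun i hi => ha (f i) (hf i hi)

lemma paf_sum_eq_zero_of_lt {n : ℕ} {a b c d : ℕ → ℤ}
    (h : ∀ s, 1 ≤ s → s ≤ n / 2 → paf n a s + paf n b s + paf n c s + paf n d s = 0)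
    {t : ℕ} (ht : 0 < t) (htn : t < n) :
    paf n a t + paf n b t + paf n c t + paf n d t = 0 := by
  have := NeZero.of_pos (ht.trans htn)
  rcases le_or_gt t (n / 2) with hle | hgt
  · exact h t ht hle
  have hneg : ((n - t : ℕ) : ZMod n) = -t := by
    rw [Nat.cast_sub htn.le, ZMod.natCast_self, zero_sub]
  simp only [paf_eq_of_natCast_eq_neg _ hneg]
  exact h (n - t) (by omega) (by omega)

theorem williamson_automorphism (n : ℕ) (a b c d : ℕ → ℤ)
    (hW : IsWilliamson n a b c d) (k : ℕ) (hk : Nat.Coprime k n) :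
    IsWilliamson n
      (fun i => a (k * i % n)) (fun i => b (k * i % n))
      (fun i => c (k * i % n)) (fun i => d (k * i % n)) := by
  obtain ⟨ha, hb, hc, hd, pa, pb, pc, pd, hpaf⟩ := hW
  have hmod : ∀ i < n, k * i % n < n := fun i hi => Nat.mod_lt _ (by omega)
  refine ⟨ha.comp_mul_mod k, hb.comp_mul_mod k, hc.comp_mul_mod k, hd.comp_mul_mod k,
    pa.comp hmod, pb.comp hmod, pc.comp hmod, pd.comp hmod, fun s hs hsn => ?_⟩
  have hn : 0 < n := by omega
  have := NeZero.of_pos hn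
  have hks : 0 < k * s % n := by
    refine Nat.pos_of_ne_zero fun h0 => ?_
    have := Nat.le_of_dvd hs (hk.symm.dvd_of_dvd_mul_left (Nat.dvd_of_mod_eq_zero h0))
    omega
  simp only [paf_comp_mul_mod _ hk]
  exact paf_sum_eq_zero_of_lt hpaf hks (Nat.mod_lt _ hn)
end
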